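/- Let v be positive C² with |∇_g v|_g > 0, let ε∈(0,1], ψ(s)=s·exp(−∫₀ˢ dt/(t^{1−ε}(1+t^ε))), and φ(s)=ψ(s)/(sψ'(s)). Then for the composed function ψ(v): F_{ψ(v)}^g = φ(v) F_v^g − φ'(v) v, where F_u^g := (uΔ_g u − |∇_g u|²_g)/|∇_g u|²_g. -/

import Mathlib

noncomputable section
open scoped BigOperators
open Real

variable {n : ℕ}

/-- partial derivative in coordinate direction `i`. -/
def pd (i : Fin n) (f : (Fin n → ℝ) → ℝ) (x : Fin n → ℝ) : ℝ :=
  fderiv ℝ f x (Pi.single i 1)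

/-- the g-gradient ∇_g f = g⁻¹ ∇f. -/
def gGrad (ginv : (Fin n → ℝ) → Matrix (Fin n) (Fin n) ℝ)
    (f : (Fin n → ℝ) → ℝ) (x : Fin n → ℝ) : Fin n → ℝ :=
  fun i => ∑ j, ginv x i j * pd j f x

/-- divergence of a vector field. -/
def vdiv (X : (Fin n → ℝ) → Fin n → ℝ) (x : Fin n → ℝ) : ℝ :=
  ∑ i, pd i (fun y => X y i) x

/-- the g-Laplacian Δ_g f = div(g⁻¹∇f). -/
def gLap (ginv : (Fin n → ℝ) → Matrix (Fin n) (Fin n) ℝ)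
    (f : (Fin n → ℝ) → ℝ) (x : Fin n → ℝ) : ℝ :=
  vdiv (gGrad ginv f) x

/-- the g-pairing ∇_g u ·_g ∇_g f = ⟨g⁻¹∇u, ∇f⟩;
    in particular `gPair ginv f f = |∇_g f|²_g`. -/
def gPair (ginv : (Fin n → ℝ) → Matrix (Fin n) (Fin n) ℝ)
    (u f : (Fin n → ℝ) → ℝ) (x : Fin n → ℝ) : ℝ :=
  ∑ i, ∑ j, ginv x i j * pd i u x * pd j f x


/-- B_v = v ∇_g v / |∇_g v|²_g. -/
def Bv (ginv : (Fin n → ℝ) → Matrix (Fin n) (Fin n) ℝ)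
    (v : (Fin n → ℝ) → ℝ) (x : Fin n → ℝ) : Fin n → ℝ :=
  fun i => v x / gPair ginv v v x * gGrad ginv v x i

/-- F_v^g = vΔ_g v/|∇_g v|²_g − 1. -/
def Fv (ginv : (Fin n → ℝ) → Matrix (Fin n) (Fin n) ℝ)
    (v : (Fin n → ℝ) → ℝ) (x : Fin n → ℝ) : ℝ :=
  v x * gLap ginv v x / gPair ginv v v x - 1

/-- S_v^{g,ij} = ½((div B_v − F_v^g) g^{ij}) − (∂_k B_v^j)g^{ki} − (∂_k B_v^i)g^{kj}
    + B_v^k ∂_k g^{ij}. -/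
def Sv (ginv : (Fin n → ℝ) → Matrix (Fin n) (Fin n) ℝ)
    (v : (Fin n → ℝ) → ℝ) (x : Fin n → ℝ) : Matrix (Fin n) (Fin n) ℝ :=
  Matrix.of fun i j =>
    (1 / 2) * ((vdiv (Bv ginv v) x - Fv ginv v x) * ginv x i j)
    - (∑ k, pd k (fun y => Bv ginv v y j) x * ginv x k i)
    - (∑ k, pd k (fun y => Bv ginv v y i) x * ginv x k j)
    + ∑ k, Bv ginv v x k * pd k (fun y => ginv y i j) x

/-- M_v^g = S_v^g g. -/
def Mv (ginv g : (Fin n → ℝ) → Matrix (Fin n) (Fin n) ℝ)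
    (v : (Fin n → ℝ) → ℝ) (x : Fin n → ℝ) : Matrix (Fin n) (Fin n) ℝ :=
  Sv ginv v x * g x

/-!
For any `ψ` with `ψ' ≠ 0` the chain rule gives `|∇_g ψ(v)|²_g = ψ'(v)² |∇_g v|²_g` and
`Δ_g ψ(v) = ψ'(v) Δ_g v + ψ''(v) |∇_g v|²_g`, hence `F_{ψ(v)} = φ(v) (F_v + 1) + (ψψ''/ψ'²)(v) - 1`
with `φ = ψ / (s ψ')`. Differentiating `φ` gives `s φ' = 1 - φ - ψψ''/ψ'²`, which is the identity.
The singular weight enters only through its closed form `ψ(s) = s (1 + s^ε)^(-1/ε)`: the integrand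
is the derivative of `log (1 + t^ε) / ε`, so `ψ` is smooth on `(0, ∞)` with
`ψ'(s) = (1 + s^ε)^(-1/ε - 1) > 0`.
-/
open Filter Topology Set

section SingularWeight

variable {ε : ℝ}

lemma hasDerivAt_log_one_add_rpow_div (hε : ε ≠ 0) {t : ℝ} (ht : 0 < t) :
    HasDerivAt (fun t : ℝ => Real.log (1 + t ^ ε) / ε) (1 / (t ^ (1 - ε) * (1 + t ^ ε))) t := by
  have hd : HasDerivAt (fun t : ℝ => 1 + t ^ ε) (ε * t ^ (ε - 1)) t :=
    (hasDerivAt_rpow_const (Or.inl ht.ne')).const_add 1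
  refine ((hd.log (by positivity)).div_const ε).congr_deriv ?_
  rw [rpow_sub ht, rpow_sub ht, rpow_one]
  field_simp

lemma integral_singularWeight (hε : 0 < ε) {s : ℝ} (hs : 0 ≤ s) :
    ∫ t in (0:ℝ)..s, 1 / (t ^ (1 - ε) * (1 + t ^ ε)) = Real.log (1 + s ^ ε) / ε := by
  have hcont : ContinuousOn (fun t : ℝ => Real.log (1 + t ^ ε) / ε) (Icc 0 s) := by
    refine ContinuousOn.div_const (ContinuousOn.log ?_ fun t ht => ?_) ε
    · exact continuousOn_const.add (continuousOn_id.rpow_const fun _ _ => Or.inr hε.le)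
    · have := rpow_nonneg ht.1 ε
      positivity
  have hderiv : ∀ t ∈ Ioo 0 s, HasDerivAt (fun t : ℝ => Real.log (1 + t ^ ε) / ε)
      (1 / (t ^ (1 - ε) * (1 + t ^ ε))) t :=
    fun t ht => hasDerivAt_log_one_add_rpow_div hε.ne' ht.1
  have hint := intervalIntegral.integrableOn_deriv_of_nonneg hcont hderiv fun t ht => by
    have := ht.1
    positivity
  rw [intervalIntegral.integral_eq_sub_of_hasDerivAt_of_le hs hcont hderiv
    ((intervalIntegrable_iff_integrableOn_Ioc_of_le hs).2 hint), zero_rpow hε.ne']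
  simp

lemma mul_exp_neg_integral_singularWeight (hε : 0 < ε) {s : ℝ} (hs : 0 ≤ s) :
    s * exp (-∫ t in (0:ℝ)..s, 1 / (t ^ (1 - ε) * (1 + t ^ ε))) = s * (1 + s ^ ε) ^ (-1 / ε) := by
  have : 0 < 1 + s ^ ε := by
    have := rpow_nonneg hs ε
    positivity
  rw [integral_singularWeight hε hs, rpow_def_of_pos this]
  ring_nf

lemma hasDerivAt_mul_one_add_rpow (hε : ε ≠ 0) {s : ℝ} (hs : 0 < s) :
    HasDerivAt (fun t : ℝ => t * (1 + t ^ ε) ^ (-1 / ε)) ((1 + s ^ ε) ^ (-1 / ε - 1)) s := by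
  have hp : 0 < 1 + s ^ ε := by positivity
  have hd : HasDerivAt (fun t : ℝ => 1 + t ^ ε) (ε * s ^ (ε - 1)) s :=
    (hasDerivAt_rpow_const (Or.inl hs.ne')).const_add 1
  refine ((hasDerivAt_id s).mul (hd.rpow_const (p := -1 / ε) (Or.inl hp.ne'))).congr_deriv ?_
  rw [rpow_sub hp, rpow_sub hs, rpow_one, rpow_one, id]
  field_simp
  ring

end SingularWeight

section Composition

variable {ginv : (Fin n → ℝ) → Matrix (Fin n) (Fin n) ℝ} {f g v : (Fin n → ℝ) → ℝ}
  {x : Fin n → ℝ} {h h' : ℝ → ℝ} {d : ℝ}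

lemma pd_congr {i : Fin n} (hfg : f =ᶠ[𝓝 x] g) : pd i f x = pd i g x := by
  rw [pd, pd, hfg.fderiv_eq]

lemma pd_comp {i : Fin n} (hh : HasDerivAt h d (v x)) (hv : DifferentiableAt ℝ v x) :
    pd i (fun y => h (v y)) x = d * pd i v x := by
  have hc : HasFDerivAt (fun y => h (v y)) (d • fderiv ℝ v x) x :=
    hh.comp_hasFDerivAt x hv.hasFDerivAt
  rw [pd, hc.fderiv, pd]
  rfl

lemma pd_mul {i : Fin n} (hf : DifferentiableAt ℝ f x) (hg : DifferentiableAt ℝ g x) :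
    pd i (fun y => f y * g y) x = pd i f x * g x + f x * pd i g x := by
  rw [pd, fderiv_fun_mul hf hg, pd, pd]
  simp only [add_apply, smul_apply, smul_eq_mul]
  ring

lemma differentiableAt_pd {i : Fin n} (hf : ContDiffAt ℝ 2 f x) : DifferentiableAt ℝ (pd i f) x :=
  ((hf.fderiv_right (m := 1) (by norm_num)).clm_apply contDiffAt_const).differentiableAt
    one_ne_zero

lemma gPair_eq_sum_pd_mul_gGrad (u : (Fin n → ℝ) → ℝ) :
    gPair ginv u f x = ∑ i, pd i u x * gGrad ginv f x i := by
  simp only [gPair, gGrad, Finset.mul_sum]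
  exact Finset.sum_congr rfl fun i _ => Finset.sum_congr rfl fun j _ => by ring

lemma gGrad_comp (i : Fin n) (hh : HasDerivAt h d (v x)) (hv : DifferentiableAt ℝ v x) :
    gGrad ginv (fun y => h (v y)) x i = d * gGrad ginv v x i := by
  simp only [gGrad, pd_comp hh hv, Finset.mul_sum]
  exact Finset.sum_congr rfl fun j _ => by ring

lemma gPair_comp (hh : HasDerivAt h d (v x)) (hv : DifferentiableAt ℝ v x) :
    gPair ginv (fun y => h (v y)) (fun y => h (v y)) x = d ^ 2 * gPair ginv v v x := by
  simp only [gPair, pd_comp hh hv, Finset.mul_sum]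
  exact Finset.sum_congr rfl fun i _ => Finset.sum_congr rfl fun j _ => by ring

lemma gLap_comp {h'' : ℝ} (hg : ∀ i j, DifferentiableAt ℝ (fun y => ginv y i j) x)
    (hv : ContDiffAt ℝ 2 v x) (hh : ∀ᶠ t in 𝓝 (v x), HasDerivAt h (h' t) t)
    (hh' : HasDerivAt h' h'' (v x)) :
    gLap ginv (fun y => h (v y)) x = h' (v x) * gLap ginv v x + h'' * gPair ginv v v x := by
  have hvx : DifferentiableAt ℝ v x := hv.differentiableAt (by norm_num)
  have hgrad_comp (i : Fin n) : (fun y => gGrad ginv (fun z => h (v z)) y i) =ᶠ[𝓝 x]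
      fun y => h' (v y) * gGrad ginv v y i := by
    filter_upwards [hv.continuousAt.eventually hh, hv.eventually (by simp)] with y hhy hvy
    exact gGrad_comp i hhy (hvy.differentiableAt (by norm_num))
  have hgrad_diff (i : Fin n) : DifferentiableAt ℝ (fun y => gGrad ginv v y i) x :=
    DifferentiableAt.fun_sum fun j _ => (hg i j).mul (differentiableAt_pd hv)
  have hdiv (i : Fin n) : pd i (fun y => gGrad ginv (fun z => h (v z)) y i) x
      = h'' * (pd i v x * gGrad ginv v x i) + h' (v x) * pd i (fun y => gGrad ginv v y i) x := by
    have hh'v : DifferentiableAt ℝ (fun y => h' (v y)) x := hh'.differentiableAt.comp x hvx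
    rw [pd_congr (hgrad_comp i), pd_mul hh'v (hgrad_diff i), pd_comp hh' hvx]
    ring
  simp only [gLap, vdiv, hdiv, Finset.sum_add_distrib, ← Finset.mul_sum,
    ← gPair_eq_sum_pd_mul_gGrad]
  ring

end Composition

lemma deriv_mul_self_of_eventuallyEq_div_mul_deriv {h h' φ : ℝ → ℝ} {h'' s : ℝ} (hs : s ≠ 0)
    (hh : ∀ᶠ t in 𝓝 s, HasDerivAt h (h' t) t) (hh' : HasDerivAt h' h'' s) (hne : h' s ≠ 0)
    (hφ : φ =ᶠ[𝓝 s] fun t => h t / (t * h' t)) :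
    deriv φ s * s = 1 - φ s - h s * h'' / h' s ^ 2 := by
  have hd : HasDerivAt (fun t => h t / (t * h' t))
      ((h' s * (s * h' s) - h s * (1 * h' s + s * h'')) / (s * h' s) ^ 2) s :=
    hh.self_of_nhds.div ((hasDerivAt_id s).mul hh') (mul_ne_zero hs hne)
  rw [hφ.deriv_eq, hd.deriv, hφ.eq_of_nhds]
  field_simp
  ring

theorem Fv_comp_eq_mul_Fv_sub {ginv : (Fin n → ℝ) → Matrix (Fin n) (Fin n) ℝ}
    {v : (Fin n → ℝ) → ℝ} {x : Fin n → ℝ} {h h' φ : ℝ → ℝ} {h'' : ℝ}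
    (hg : ∀ i j, DifferentiableAt ℝ (fun y => ginv y i j) x) (hv : ContDiffAt ℝ 2 v x)
    (hh : ∀ᶠ t in 𝓝 (v x), HasDerivAt h (h' t) t) (hh' : HasDerivAt h' h'' (v x))
    (hvx : v x ≠ 0) (hh'v : h' (v x) ≠ 0) (hQ : gPair ginv v v x ≠ 0)
    (hφ : φ =ᶠ[𝓝 (v x)] fun t => h t / (t * h' t)) :
    Fv ginv (fun y => h (v y)) x = φ (v x) * Fv ginv v x - deriv φ (v x) * v x := by
  rw [deriv_mul_self_of_eventuallyEq_div_mul_deriv hvx hh hh' hh'v hφ, hφ.eq_of_nhds, Fv, Fv,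
    gLap_comp hg hv hh hh', gPair_comp hh.self_of_nhds (hv.differentiableAt (by norm_num))]
  field_simp
  ring

theorem Fv_comp_psi_general
    (ε : ℝ) (hε : 0 < ε)
    (ψ φ : ℝ → ℝ)
    (hψ : ∀ s : ℝ, ψ s =
      s * Real.exp (-∫ t in (0:ℝ)..s, 1 / (t ^ (1 - ε) * (1 + t ^ ε))))
    (hφ : ∀ s : ℝ, 0 < s → φ s = ψ s / (s * deriv ψ s))
    (ginv : (Fin n → ℝ) → Matrix (Fin n) (Fin n) ℝ)
    (hg : ∀ i j, ContDiffOn ℝ 1 (fun x => ginv x i j) {x : Fin n → ℝ | x ≠ 0})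
    (v : (Fin n → ℝ) → ℝ)
    (hv : ContDiffOn ℝ 2 v {x : Fin n → ℝ | x ≠ 0})
    (hvpos : ∀ x : Fin n → ℝ, x ≠ 0 → 0 < v x)
    (hgrad : ∀ x : Fin n → ℝ, x ≠ 0 → gPair ginv v v x ≠ 0)
    (x : Fin n → ℝ) (hx : x ≠ 0) :
    Fv ginv (fun y => ψ (v y)) x = φ (v x) * Fv ginv v x - deriv φ (v x) * v x := by
  have hxU : {y : Fin n → ℝ | y ≠ 0} ∈ 𝓝 x := isOpen_ne.mem_nhds hx
  have hvx := hvpos x hx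
  have hψ' (s : ℝ) (hs : 0 < s) : HasDerivAt ψ ((1 + s ^ ε) ^ (-1 / ε - 1)) s := by
    refine (hasDerivAt_mul_one_add_rpow hε.ne' hs).congr_of_eventuallyEq ?_
    filter_upwards [Ioi_mem_nhds hs] with t ht
    rw [hψ, mul_exp_neg_integral_singularWeight hε ht.out.le]
  have hψ'' : HasDerivAt (fun t => (1 + t ^ ε) ^ (-1 / ε - 1))
      (ε * v x ^ (ε - 1) * (-1 / ε - 1) * (1 + v x ^ ε) ^ (-1 / ε - 1 - 1)) (v x) :=
    ((hasDerivAt_rpow_const (Or.inl hvx.ne')).const_add 1).rpow_const (Or.inl (by positivity))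
  refine Fv_comp_eq_mul_Fv_sub (fun i j => ((hg i j).contDiffAt hxU).differentiableAt one_ne_zero)
    (hv.contDiffAt hxU) (eventually_of_mem (Ioi_mem_nhds hvx) hψ') hψ'' hvx.ne' (by positivity)
    (hgrad x hx) ?_
  filter_upwards [Ioi_mem_nhds hvx] with t ht
  rw [hφ t ht, (hψ' t ht).deriv]

/-- F_{ψ(v)}^g = φ(v) F_v^g − φ'(v) v, where ψ is the singular weight with
    parameter ε ∈ (0,1] and φ(s) = ψ(s)/(sψ'(s)). -/
theorem Fv_comp_psi
    (ε : ℝ) (hε : 0 < ε) (hε1 : ε ≤ 1)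
    (ψ φ : ℝ → ℝ)
    (hψ : ∀ s : ℝ, ψ s =
      s * Real.exp (-∫ t in (0:ℝ)..s, 1 / (t ^ (1 - ε) * (1 + t ^ ε))))
    (hφ : ∀ s : ℝ, 0 < s → φ s = ψ s / (s * deriv ψ s))
    (ginv : (Fin n → ℝ) → Matrix (Fin n) (Fin n) ℝ)
    (hsym : ∀ x i j, ginv x i j = ginv x j i)
    (hell : ∀ (x : Fin n → ℝ) (ξ : Fin n → ℝ), ξ ≠ 0 → 0 < ∑ i, ∑ j, ginv x i j * ξ i * ξ j)
    (hg : ∀ i j, ContDiffOn ℝ 1 (fun x => ginv x i j) {x : Fin n → ℝ | x ≠ 0})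
    (v : (Fin n → ℝ) → ℝ)
    (hv : ContDiffOn ℝ 2 v {x : Fin n → ℝ | x ≠ 0})
    (hvpos : ∀ x : Fin n → ℝ, x ≠ 0 → 0 < v x)
    (hgrad : ∀ x : Fin n → ℝ, x ≠ 0 → gPair ginv v v x ≠ 0)
    (x : Fin n → ℝ) (hx : x ≠ 0) :
    Fv ginv (fun y => ψ (v y)) x = φ (v x) * Fv ginv v x - deriv φ (v x) * v x :=
  Fv_comp_psi_general ε hε ψ φ hψ hφ ginv hg v hv hvpos hgrad x hx
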